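/- arXiv:2602.14588 — 2 statements merged into one kernel-verified Lean document; each statement's English description precedes it below -/
import Mathlib

section
/- Let L, M, B be real inner product spaces and U a real vector space with linear maps D : U → L, m : U → M, γ : U → B. Let 𝒯 and ℱ be finite index sets with an injective map t : ℱ → 𝒯. Let (π_T)_{T∈𝒯} be linear maps on M that are self-adjoint and idempotent, pairwise orthogonal (π_T ∘ π_{T'} = 0 for T ≠ T'), and satisfy Σ_{T∈𝒯} π_T = id_M; let (λ_T)_{T∈𝒯} be linear maps on L with Σ_{T∈𝒯} ‖λ_T x‖² ≤ ‖x‖² for all x ∈ L; let (ρ_F)_{F∈ℱ} be self-adjoint idempotent pairwise orthogonal linear maps on B with Σ_{F∈ℱ} ρ_F = id_B. Let Q_M : M → M and Q_B : B → B be self-adjoint idempotent linear maps with Q_M ∘ π_T = π_T ∘ Q_M for all T and Q_B ∘ ρ_F = ρ_F ∘ Q_B for all F. Let 𝔄 : L → L be strongly monotone with constant C_mon > 0, i.e. C_mon ‖x − y‖² ≤ ⟪𝔄x − 𝔄y, x − y⟫ for all x, y ∈ L. Let f ∈ M, Φ ∈ B, e₁ ∈ M, c ∈ ℝ, and suppose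 σ ∈ L, dσ ∈ M, nσ ∈ B satisfy the Green formula ⟨nσ, γv⟩ = ⟪σ, Dv⟫ + ⟨dσ, m v⟩ for all v ∈ U, together with the flux constraints dσ = −Q_M f + c·e₁ and nσ = Q_B Φ. Let u, u_ℓ, ũ ∈ U satisfy D ũ = D u_ℓ, ⟨e₁, m(u − ũ)⟩ = 0, and γ(u − ũ) = γ(u − u_ℓ) − b₁ for some b₁ ∈ B with Q_B b₁ = b₁. Assume the local Poincaré estimates ‖π_T((m(u − ũ)) − Q_M(m(u − ũ)))‖ ≤ (h_T/π)·‖λ_T(D(u − ũ))‖ for all T ∈ 𝒯, with constants h_T ≥ 0, and the local trace estimates ‖ρ_F((γ(u − u_ℓ)) − Q_B(γ(u − u_ℓ)))‖ ≤ C_N · h_F^{1/2} · ‖λ_{t(F)}(D(u − u_ℓ))‖ for all F ∈ ℱ, with constants h_F ≥ 0 and C_N ≥ 0. Then, with e_int := ⟪𝔄(Du) − 𝔄(Du_ℓ), D(u − u_ℓ)⟫^{1/2}, there holds ⟨f, m(u − ũ)⟩ − ⟪𝔄(Dũ), D(u − ũ)⟫ + ⟨Φ, γ(u − ũ)⟩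 ≤ e_int · [ C_mon^{−1/2} ‖𝔄(Du_ℓ) − σ‖ + π^{−1} C_mon^{−1/2} (Σ_{T∈𝒯} h_T² ‖π_T(f − Q_M f)‖²)^{1/2} + C_N C_mon^{−1/2} (Σ_{F∈ℱ} h_F ‖ρ_F(Φ − Q_B Φ)‖²)^{1/2} ]. -/
open scoped RealInnerProductSpace

-- projection decomposition
lemma proj_decomp {M ι : Type*} [NormedAddCommGroup M] [InnerProductSpace ℝ M] [Fintype ι]
    (π : ι → (M →ₗ[ℝ] M)) (hsa : ∀ (i : ι) (x y : M), ⟪π i x, y⟫ = ⟪x, π i y⟫)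
    (hid : ∀ i, (π i).comp (π i) = π i) (hsum : ∑ i : ι, π i = LinearMap.id)
    (a b : M) : ⟪a, b⟫ = ∑ i : ι, ⟪π i a, π i b⟫ := by
  have h1 : a = ∑ i : ι, π i a := by
    rw [← LinearMap.sum_apply, hsum, LinearMap.id_apply]
  conv_lhs => rw [h1]
  rw [sum_inner]
  refine Finset.sum_congr rfl fun i _ => ?_
  have h2 : π i a = π i (π i a) := by
    conv_lhs => rw [← hid i]
    rfl
  rw [← hsa i (π i a) b, ← h2]

-- orthogonality f - Q f ⊥ Q b
lemma qorth {M : Type*} [NormedAddCommGroup M] [InnerProductSpace ℝ M]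
    (Q : M →ₗ[ℝ] M) (hsa : ∀ x y : M, ⟪Q x, y⟫ = ⟪x, Q y⟫)
    (hid : Q.comp Q = Q) (a b : M) : ⟪a - Q a, Q b⟫ = 0 := by
  have h1 : ⟪a - Q a, Q b⟫ = ⟪Q (a - Q a), b⟫ := (hsa _ _).symm
  have h2 : Q (a - Q a) = 0 := by
    rw [map_sub]
    have : Q (Q a) = Q a := by
      conv_lhs => rw [← LinearMap.comp_apply, hid]
    rw [this, sub_self]
  rw [h1, h2, inner_zero_left]

lemma cs_sqrt {ι : Type*} [Fintype ι] (f g : ι → ℝ) (hf : ∀ i, 0 ≤ f i) (hg : ∀ i, 0 ≤ g i) :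
    ∑ i : ι, f i * g i ≤ Real.sqrt (∑ i : ι, f i ^ 2) * Real.sqrt (∑ i : ι, g i ^ 2) := by
  have h := Finset.sum_mul_sq_le_sq_mul_sq Finset.univ f g
  have hnn : 0 ≤ ∑ i : ι, f i * g i :=
    Finset.sum_nonneg fun i _ => mul_nonneg (hf i) (hg i)
  calc ∑ i : ι, f i * g i = Real.sqrt ((∑ i : ι, f i * g i) ^ 2) := (Real.sqrt_sq hnn).symm
    _ ≤ Real.sqrt ((∑ i : ι, f i ^ 2) * ∑ i : ι, g i ^ 2) := Real.sqrt_le_sqrt h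
    _ = _ := Real.sqrt_mul (Finset.sum_nonneg fun i _ => sq_nonneg _) _

/-- Interior residual estimate (Steps 2–5) in the proof of the main functional
upper bound theorem for FEM-BEM coupling, in abstract form. -/
theorem stmt_3
    {U L M B : Type*}
    [AddCommGroup U] [Module ℝ U]
    [NormedAddCommGroup L] [InnerProductSpace ℝ L]
    [NormedAddCommGroup M] [InnerProductSpace ℝ M]
    [NormedAddCommGroup B] [InnerProductSpace ℝ B]
    (D : U →ₗ[ℝ] L) (m : U →ₗ[ℝ] M) (γ : U →ₗ[ℝ] B)
    {𝒯 ℱ : Type*} [Fintype 𝒯] [Fintype ℱ]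
    (t : ℱ → 𝒯) (ht : Function.Injective t)
    -- the element restrictions π_T on M
    (π : 𝒯 → (M →ₗ[ℝ] M))
    (hπ_sa : ∀ (T : 𝒯) (x y : M), ⟪π T x, y⟫ = ⟪x, π T y⟫)
    (hπ_idem : ∀ T : 𝒯, (π T).comp (π T) = π T)
    (hπ_orth : ∀ T T' : 𝒯, T ≠ T' → (π T).comp (π T') = 0)
    (hπ_sum : ∑ T : 𝒯, π T = LinearMap.id)
    -- the element restrictions λ_T on L
    (lam : 𝒯 → (L →ₗ[ℝ] L))
    (hlam : ∀ x : L, ∑ T : 𝒯, ‖lam T x‖ ^ 2 ≤ ‖x‖ ^ 2)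
    -- the facet restrictions ρ_F on B
    (ρ : ℱ → (B →ₗ[ℝ] B))
    (hρ_sa : ∀ (F : ℱ) (x y : B), ⟪ρ F x, y⟫ = ⟪x, ρ F y⟫)
    (hρ_idem : ∀ F : ℱ, (ρ F).comp (ρ F) = ρ F)
    (hρ_orth : ∀ F F' : ℱ, F ≠ F' → (ρ F).comp (ρ F') = 0)
    (hρ_sum : ∑ F : ℱ, ρ F = LinearMap.id)
    -- the projections Q_M and Q_B
    (Q_M : M →ₗ[ℝ] M)
    (hQM_sa : ∀ x y : M, ⟪Q_M x, y⟫ = ⟪x, Q_M y⟫)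
    (hQM_idem : Q_M.comp Q_M = Q_M)
    (hQM_comm : ∀ T : 𝒯, Q_M.comp (π T) = (π T).comp Q_M)
    (Q_B : B →ₗ[ℝ] B)
    (hQB_sa : ∀ x y : B, ⟪Q_B x, y⟫ = ⟪x, Q_B y⟫)
    (hQB_idem : Q_B.comp Q_B = Q_B)
    (hQB_comm : ∀ F : ℱ, Q_B.comp (ρ F) = (ρ F).comp Q_B)
    -- the strongly monotone diffusion
    (𝔄 : L → L) (C_mon : ℝ) (hC_mon : 0 < C_mon)
    (hmon : ∀ x y : L, C_mon * ‖x - y‖ ^ 2 ≤ ⟪𝔄 x - 𝔄 y, x - y⟫)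
    -- data and flux
    (f : M) (Φ : B) (e₁ : M) (c : ℝ)
    (σ : L) (dσ : M) (nσ : B)
    (hGreen : ∀ v : U, ⟪nσ, γ v⟫ = ⟪σ, D v⟫ + ⟪dσ, m v⟫)
    (hdiv : dσ = -Q_M f + c • e₁)
    (hnormal : nσ = Q_B Φ)
    -- approximations
    (u uℓ uTil : U)
    (hDuTil : D uTil = D uℓ)
    (hmean : ⟪e₁, m (u - uTil)⟫ = 0)
    (b₁ : B) (hb₁ : Q_B b₁ = b₁)
    (htrace : γ (u - uTil) = γ (u - uℓ) - b₁)
    -- local Poincaré and trace estimates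
    (h𝒯 : 𝒯 → ℝ) (hh𝒯 : ∀ T, 0 ≤ h𝒯 T)
    (hPoin : ∀ T : 𝒯,
      ‖π T (m (u - uTil) - Q_M (m (u - uTil)))‖
        ≤ (h𝒯 T / Real.pi) * ‖lam T (D (u - uTil))‖)
    (hℱ : ℱ → ℝ) (hhℱ : ∀ F, 0 ≤ hℱ F)
    (C_N : ℝ) (hC_N : 0 ≤ C_N)
    (htr : ∀ F : ℱ,
      ‖ρ F (γ (u - uℓ) - Q_B (γ (u - uℓ)))‖
        ≤ C_N * Real.sqrt (hℱ F) * ‖lam (t F) (D (u - uℓ))‖) :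
    ⟪f, m (u - uTil)⟫ - ⟪𝔄 (D uTil), D (u - uTil)⟫ + ⟪Φ, γ (u - uTil)⟫
      ≤ Real.sqrt ⟪𝔄 (D u) - 𝔄 (D uℓ), D (u - uℓ)⟫ *
        ((Real.sqrt C_mon)⁻¹ * ‖𝔄 (D uℓ) - σ‖
          + Real.pi⁻¹ * (Real.sqrt C_mon)⁻¹ *
              Real.sqrt (∑ T : 𝒯, (h𝒯 T) ^ 2 * ‖π T (f - Q_M f)‖ ^ 2)
          + C_N * (Real.sqrt C_mon)⁻¹ *
              Real.sqrt (∑ F : ℱ, hℱ F * ‖ρ F (Φ - Q_B Φ)‖ ^ 2)) := by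

  classical
  -- abbreviations
  set w : L := D (u - uℓ) with hw_def
  have hDv : D (u - uTil) = w := by
    rw [hw_def, map_sub, map_sub, hDuTil]
  have h𝔄eq : 𝔄 (D uTil) = 𝔄 (D uℓ) := by rw [hDuTil]
  set E : ℝ := ⟪𝔄 (D u) - 𝔄 (D uℓ), D (u - uℓ)⟫ with hE_def
  set S_M : ℝ := Real.sqrt (∑ T : 𝒯, (h𝒯 T) ^ 2 * ‖π T (f - Q_M f)‖ ^ 2) with hSM_def
  set S_B : ℝ := Real.sqrt (∑ F : ℱ, hℱ F * ‖ρ F (Φ - Q_B Φ)‖ ^ 2) with hSB_def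
  -- monotonicity bound on ‖w‖
  have hmon' : C_mon * ‖w‖ ^ 2 ≤ E := by
    have h := hmon (D u) (D uℓ)
    have : D u - D uℓ = w := by rw [hw_def, map_sub]
    rwa [this] at h
  have hE0 : (0:ℝ) ≤ E := le_trans (by positivity) hmon'
  have hwE : ‖w‖ ≤ Real.sqrt E * (Real.sqrt C_mon)⁻¹ := by
    have h1 : ‖w‖ ^ 2 ≤ E / C_mon := by
      rw [le_div_iff₀ hC_mon]; linarith
    calc ‖w‖ = Real.sqrt (‖w‖ ^ 2) := (Real.sqrt_sq (norm_nonneg _)).symm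
      _ ≤ Real.sqrt (E / C_mon) := Real.sqrt_le_sqrt h1
      _ = Real.sqrt E / Real.sqrt C_mon := Real.sqrt_div hE0 _
      _ = Real.sqrt E * (Real.sqrt C_mon)⁻¹ := div_eq_mul_inv _ _
  -- Green identity rearranged
  have hG : ⟪Q_B Φ, γ (u - uTil)⟫ = ⟪σ, D (u - uTil)⟫ - ⟪Q_M f, m (u - uTil)⟫ := by
    have h := hGreen (u - uTil)
    rw [hdiv, hnormal] at h
    rw [h, inner_add_left, inner_neg_left, real_inner_smul_left, hmean]
    ring
  -- split of the left-hand side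
  have key : ⟪f, m (u - uTil)⟫ - ⟪𝔄 (D uTil), D (u - uTil)⟫ + ⟪Φ, γ (u - uTil)⟫
      = ⟪f - Q_M f, m (u - uTil)⟫ + ⟪σ - 𝔄 (D uℓ), D (u - uTil)⟫
        + ⟪Φ - Q_B Φ, γ (u - uTil)⟫ := by
    rw [h𝔄eq, inner_sub_left, inner_sub_left, inner_sub_left]
    linarith
  -- bound for the interior data oscillation term
  have hA : ⟪f - Q_M f, m (u - uTil)⟫ ≤ Real.pi⁻¹ * (S_M * ‖w‖) := by
    have step1 : ⟪f - Q_M f, m (u - uTil)⟫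
        = ⟪f - Q_M f, m (u - uTil) - Q_M (m (u - uTil))⟫ := by
      rw [inner_sub_right, qorth Q_M hQM_sa hQM_idem f (m (u - uTil)), sub_zero]
    have step2 : ⟪f - Q_M f, m (u - uTil) - Q_M (m (u - uTil))⟫
        = ∑ T : 𝒯, ⟪π T (f - Q_M f), π T (m (u - uTil) - Q_M (m (u - uTil)))⟫ :=
      proj_decomp π hπ_sa hπ_idem hπ_sum _ _
    have step3 : ∑ T : 𝒯, ⟪π T (f - Q_M f), π T (m (u - uTil) - Q_M (m (u - uTil)))⟫
        ≤ ∑ T : 𝒯, Real.pi⁻¹ * ((h𝒯 T * ‖π T (f - Q_M f)‖) * ‖lam T (D (u - uTil))‖) := by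
      refine Finset.sum_le_sum fun T _ => ?_
      have h1 := real_inner_le_norm (π T (f - Q_M f))
        (π T (m (u - uTil) - Q_M (m (u - uTil))))
      have h2 := hPoin T
      have h3 : ⟪π T (f - Q_M f), π T (m (u - uTil) - Q_M (m (u - uTil)))⟫
          ≤ ‖π T (f - Q_M f)‖ * ((h𝒯 T / Real.pi) * ‖lam T (D (u - uTil))‖) :=
        h1.trans (mul_le_mul_of_nonneg_left h2 (norm_nonneg _))
      refine h3.trans (le_of_eq ?_)
      rw [div_eq_mul_inv]
      ring
    have step4 : ∑ T : 𝒯, (h𝒯 T * ‖π T (f - Q_M f)‖) * ‖lam T (D (u - uTil))‖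
        ≤ S_M * ‖w‖ := by
      have hcs := cs_sqrt (fun T => h𝒯 T * ‖π T (f - Q_M f)‖)
        (fun T => ‖lam T (D (u - uTil))‖)
        (fun T => mul_nonneg (hh𝒯 T) (norm_nonneg _)) (fun T => norm_nonneg _)
      refine hcs.trans ?_
      have e1 : ∑ T : 𝒯, (h𝒯 T * ‖π T (f - Q_M f)‖) ^ 2
          = ∑ T : 𝒯, (h𝒯 T) ^ 2 * ‖π T (f - Q_M f)‖ ^ 2 := by
        refine Finset.sum_congr rfl fun T _ => ?_; ring
      have e2 : Real.sqrt (∑ T : 𝒯, ‖lam T (D (u - uTil))‖ ^ 2) ≤ ‖w‖ := by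
        rw [← Real.sqrt_sq (norm_nonneg w), ← hDv]
        exact Real.sqrt_le_sqrt (hlam _)
      rw [e1]
      exact mul_le_mul_of_nonneg_left e2 (Real.sqrt_nonneg _)
    calc ⟪f - Q_M f, m (u - uTil)⟫
        ≤ ∑ T : 𝒯, Real.pi⁻¹ * ((h𝒯 T * ‖π T (f - Q_M f)‖) * ‖lam T (D (u - uTil))‖) := by
          rw [step1, step2]; exact step3
      _ = Real.pi⁻¹ * ∑ T : 𝒯, (h𝒯 T * ‖π T (f - Q_M f)‖) * ‖lam T (D (u - uTil))‖ := by
          rw [Finset.mul_sum]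
      _ ≤ Real.pi⁻¹ * (S_M * ‖w‖) :=
          mul_le_mul_of_nonneg_left step4 (by positivity)
  -- bound for the flux term
  have hB : ⟪σ - 𝔄 (D uℓ), D (u - uTil)⟫ ≤ ‖𝔄 (D uℓ) - σ‖ * ‖w‖ := by
    rw [hDv]
    calc ⟪σ - 𝔄 (D uℓ), w⟫ ≤ ‖σ - 𝔄 (D uℓ)‖ * ‖w‖ := real_inner_le_norm _ _
      _ = ‖𝔄 (D uℓ) - σ‖ * ‖w‖ := by rw [norm_sub_rev]
  -- bound for the boundary data oscillation term
  have hC : ⟪Φ - Q_B Φ, γ (u - uTil)⟫ ≤ C_N * (S_B * ‖w‖) := by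
    have step0 : ⟪Φ - Q_B Φ, γ (u - uTil)⟫ = ⟪Φ - Q_B Φ, γ (u - uℓ)⟫ := by
      rw [htrace, inner_sub_right]
      have : ⟪Φ - Q_B Φ, b₁⟫ = 0 := by
        rw [← hb₁]; exact qorth Q_B hQB_sa hQB_idem Φ b₁
      rw [this, sub_zero]
    have step1 : ⟪Φ - Q_B Φ, γ (u - uℓ)⟫
        = ⟪Φ - Q_B Φ, γ (u - uℓ) - Q_B (γ (u - uℓ))⟫ := by
      rw [inner_sub_right, qorth Q_B hQB_sa hQB_idem Φ (γ (u - uℓ)), sub_zero]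
    have step2 : ⟪Φ - Q_B Φ, γ (u - uℓ) - Q_B (γ (u - uℓ))⟫
        = ∑ F : ℱ, ⟪ρ F (Φ - Q_B Φ), ρ F (γ (u - uℓ) - Q_B (γ (u - uℓ)))⟫ :=
      proj_decomp ρ hρ_sa hρ_idem hρ_sum _ _
    have step3 : ∑ F : ℱ, ⟪ρ F (Φ - Q_B Φ), ρ F (γ (u - uℓ) - Q_B (γ (u - uℓ)))⟫
        ≤ ∑ F : ℱ, C_N * ((Real.sqrt (hℱ F) * ‖ρ F (Φ - Q_B Φ)‖) * ‖lam (t F) (D (u - uℓ))‖) := by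
      refine Finset.sum_le_sum fun F _ => ?_
      have h1 := real_inner_le_norm (ρ F (Φ - Q_B Φ))
        (ρ F (γ (u - uℓ) - Q_B (γ (u - uℓ))))
      have h2 := htr F
      have h3 : ⟪ρ F (Φ - Q_B Φ), ρ F (γ (u - uℓ) - Q_B (γ (u - uℓ)))⟫
          ≤ ‖ρ F (Φ - Q_B Φ)‖ * (C_N * Real.sqrt (hℱ F) * ‖lam (t F) (D (u - uℓ))‖) :=
        h1.trans (mul_le_mul_of_nonneg_left h2 (norm_nonneg _))
      refine h3.trans (le_of_eq ?_)
      ring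
    have step4 : ∑ F : ℱ, (Real.sqrt (hℱ F) * ‖ρ F (Φ - Q_B Φ)‖) * ‖lam (t F) (D (u - uℓ))‖
        ≤ S_B * ‖w‖ := by
      have hcs := cs_sqrt (fun F => Real.sqrt (hℱ F) * ‖ρ F (Φ - Q_B Φ)‖)
        (fun F => ‖lam (t F) (D (u - uℓ))‖)
        (fun F => mul_nonneg (Real.sqrt_nonneg _) (norm_nonneg _)) (fun F => norm_nonneg _)
      refine hcs.trans ?_
      have e1 : ∑ F : ℱ, (Real.sqrt (hℱ F) * ‖ρ F (Φ - Q_B Φ)‖) ^ 2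
          = ∑ F : ℱ, hℱ F * ‖ρ F (Φ - Q_B Φ)‖ ^ 2 := by
        refine Finset.sum_congr rfl fun F _ => ?_
        rw [mul_pow, Real.sq_sqrt (hhℱ F)]
      have e2 : Real.sqrt (∑ F : ℱ, ‖lam (t F) (D (u - uℓ))‖ ^ 2) ≤ ‖w‖ := by
        rw [← Real.sqrt_sq (norm_nonneg w)]
        refine Real.sqrt_le_sqrt ?_
        have h1 : ∑ F : ℱ, ‖lam (t F) (D (u - uℓ))‖ ^ 2
            = ∑ T ∈ Finset.univ.image t, ‖lam T (D (u - uℓ))‖ ^ 2 :=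
          (Finset.sum_image (g := t) (f := fun T => ‖lam T (D (u - uℓ))‖ ^ 2) (fun a _ b _ h => ht h)).symm
        have h2 : ∑ T ∈ Finset.univ.image t, ‖lam T (D (u - uℓ))‖ ^ 2
            ≤ ∑ T : 𝒯, ‖lam T (D (u - uℓ))‖ ^ 2 :=
          Finset.sum_le_sum_of_subset_of_nonneg (Finset.subset_univ _)
            (fun _ _ _ => sq_nonneg _)
        exact h1 ▸ (h2.trans (hlam _))
      rw [e1]
      exact mul_le_mul_of_nonneg_left e2 (Real.sqrt_nonneg _)
    calc ⟪Φ - Q_B Φ, γ (u - uTil)⟫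
        ≤ ∑ F : ℱ, C_N * ((Real.sqrt (hℱ F) * ‖ρ F (Φ - Q_B Φ)‖) * ‖lam (t F) (D (u - uℓ))‖) := by
          rw [step0, step1, step2]; exact step3
      _ = C_N * ∑ F : ℱ, (Real.sqrt (hℱ F) * ‖ρ F (Φ - Q_B Φ)‖) * ‖lam (t F) (D (u - uℓ))‖ := by
          rw [Finset.mul_sum]
      _ ≤ C_N * (S_B * ‖w‖) := mul_le_mul_of_nonneg_left step4 hC_N
  -- combine everything
  have hK : (0:ℝ) ≤ ‖𝔄 (D uℓ) - σ‖ + Real.pi⁻¹ * S_M + C_N * S_B := by positivity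
  have hfinal : ⟪f, m (u - uTil)⟫ - ⟪𝔄 (D uTil), D (u - uTil)⟫ + ⟪Φ, γ (u - uTil)⟫
      ≤ (‖𝔄 (D uℓ) - σ‖ + Real.pi⁻¹ * S_M + C_N * S_B) * ‖w‖ := by
    rw [key]; nlinarith [hA, hB, hC]
  calc ⟪f, m (u - uTil)⟫ - ⟪𝔄 (D uTil), D (u - uTil)⟫ + ⟪Φ, γ (u - uTil)⟫
      ≤ (‖𝔄 (D uℓ) - σ‖ + Real.pi⁻¹ * S_M + C_N * S_B) * ‖w‖ := hfinal
    _ ≤ (‖𝔄 (D uℓ) - σ‖ + Real.pi⁻¹ * S_M + C_N * S_B)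
          * (Real.sqrt E * (Real.sqrt C_mon)⁻¹) := mul_le_mul_of_nonneg_left hwE hK
    _ = Real.sqrt E * ((Real.sqrt C_mon)⁻¹ * ‖𝔄 (D uℓ) - σ‖
          + Real.pi⁻¹ * (Real.sqrt C_mon)⁻¹ * S_M
          + C_N * (Real.sqrt C_mon)⁻¹ * S_B) := by ring
end

section
/- Let M be a real inner product space, let Q : M → M be a self-adjoint idempotent linear map, and let P := range(Q). Let e₁ ∈ P and f ∈ M. Let Z be a finite index set and suppose for each z ∈ Z we are given d_z ∈ P, elements g_z, f_z ∈ M, and a real number m_z such that ⟨d_z, q⟩ = ⟨g_z − f_z, q⟩ − m_z · ⟨q, e₁⟩ for all q ∈ P. If Σ_{z∈Z} g_z = 0 and Σ_{z∈Z} f_z = f, then Σ_{z∈Z} d_z = −Q f − (Σ_{z∈Z} m_z) · e₁. -/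
open scoped RealInnerProductSpace

/-- Divergence identity for the equilibrated flux (Proposition 3.5): the summed
local flux divergences equal `−Q f − (∑ m_z) • e₁`. -/
theorem stmt_10
    {M : Type*} [NormedAddCommGroup M] [InnerProductSpace ℝ M]
    (Q : M →ₗ[ℝ] M)
    (hQ_sa : ∀ x y : M, ⟪Q x, y⟫ = ⟪x, Q y⟫)
    (hQ_idem : Q.comp Q = Q)
    (e₁ : M) (he₁ : e₁ ∈ LinearMap.range Q)
    (f : M)
    {Z : Type*} [Fintype Z]
    (d g fz : Z → M) (m : Z → ℝ)
    (hd_mem : ∀ z : Z, d z ∈ LinearMap.range Q)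
    (hrel : ∀ z : Z, ∀ q ∈ LinearMap.range Q,
      ⟪d z, q⟫ = ⟪g z - fz z, q⟫ - m z * ⟪q, e₁⟫)
    (hg : ∑ z : Z, g z = 0)
    (hf : ∑ z : Z, fz z = f) :
    ∑ z : Z, d z = -Q f - (∑ z : Z, m z) • e₁ := by
  -- Q q = q for q ∈ range Q
  have hfix : ∀ q ∈ LinearMap.range Q, Q q = q := by
    rintro q ⟨x, rfl⟩
    have := congrArg (fun L => L x) hQ_idem
    simpa using this
  set D := ∑ z : Z, d z with hD
  set R := -Q f - (∑ z : Z, m z) • e₁ with hR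
  have hDmem : D ∈ LinearMap.range Q := Submodule.sum_mem _ fun z _ => hd_mem z
  have hRmem : R ∈ LinearMap.range Q := by
    apply Submodule.sub_mem
    · exact Submodule.neg_mem _ ⟨f, rfl⟩
    · exact Submodule.smul_mem _ _ he₁
  have key : ∀ q ∈ LinearMap.range Q, ⟪D - R, q⟫ = 0 := by
    intro q hq
    have hDq : ⟪D, q⟫ = ⟪-f, q⟫ - (∑ z : Z, m z) * ⟪q, e₁⟫ := by
      rw [hD, sum_inner]
      have : ∑ z : Z, ⟪d z, q⟫ = ∑ z : Z, (⟪g z - fz z, q⟫ - m z * ⟪q, e₁⟫) :=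
        Finset.sum_congr rfl fun z _ => hrel z q hq
      rw [this, Finset.sum_sub_distrib, ← Finset.sum_mul, ← sum_inner]
      congr 1
      rw [Finset.sum_sub_distrib, hg, hf, zero_sub]
    have hRq : ⟪R, q⟫ = ⟪-f, q⟫ - (∑ z : Z, m z) * ⟪q, e₁⟫ := by
      rw [hR, inner_sub_left, inner_neg_left, inner_neg_left, hQ_sa, hfix q hq, real_inner_smul_left,
        real_inner_comm e₁ q]
    rw [inner_sub_left, hDq, hRq, sub_self]
  have : D - R = 0 := by
    have := key (D - R) (Submodule.sub_mem _ hDmem hRmem)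
    exact inner_self_eq_zero.mp this
  exact sub_eq_zero.mp this
end
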